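/- Let F : C → D be a normal symmetric monoidal functor, A a dualisable object of C with dual A*, and assume c : F(A) ⊗ F(A*) → F(A ⊗ A*) is invertible. Then for every endomorphism f : A → A one has tr(F(f)) = i⁻¹ ∘ F(tr f) ∘ i as an endomorphism of the tensor unit 1_D. -/
import Mathlib


open CategoryTheory CategoryTheory.MonoidalCategory

/-- Duality data `(η, ε)` for a pair of objects `(A, A')` in a monoidal category:
`η : 𝟙 ⟶ A ⊗ A'` and `ε : A' ⊗ A ⟶ 𝟙` satisfying the two zigzag identities. -/
def IsDuality {C : Type*} [Category C] [MonoidalCategory C]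
    (A A' : C) (η : 𝟙_ C ⟶ A ⊗ A') (ε : A' ⊗ A ⟶ 𝟙_ C) : Prop :=
  ((λ_ A).inv ≫ (η ▷ A) ≫ (α_ A A' A).hom ≫ (A ◁ ε) ≫ (ρ_ A).hom = 𝟙 A) ∧
  ((ρ_ A').inv ≫ (A' ◁ η) ≫ (α_ A' A A').inv ≫ (ε ▷ A') ≫ (λ_ A').hom = 𝟙 A')

/-- The categorical trace of `f : A ⟶ A` with respect to duality data `(A', η, ε)`:
`𝟙 ⟶ A ⊗ A' ⟶ A ⊗ A' ⟶ A' ⊗ A ⟶ 𝟙`. -/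
def catTrace {C : Type*} [Category C] [MonoidalCategory C] [BraidedCategory C]
    {A : C} (A' : C) (η : 𝟙_ C ⟶ A ⊗ A') (ε : A' ⊗ A ⟶ 𝟙_ C) (f : A ⟶ A) :
    𝟙_ C ⟶ 𝟙_ C :=
  η ≫ (f ▷ A') ≫ (β_ A A').hom ≫ ε

open CategoryTheory.Functor.LaxMonoidal in
/-- for a normal symmetric monoidal functor `F` with `μ F A A'` invertible,
the trace of `F(f)` (with respect to the induced duality data on `F(A)`) equals
`i⁻¹ ∘ F(tr f) ∘ i`. -/
theorem stmt1 {C D : Type*} [Category C] [MonoidalCategory C] [SymmetricCategory C]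
    [Category D] [MonoidalCategory D] [SymmetricCategory D]
    (F : C ⥤ D) [F.LaxBraided] [IsIso (ε F)]
    (A A' : C) (coev : 𝟙_ C ⟶ A ⊗ A') (ev : A' ⊗ A ⟶ 𝟙_ C)
    (h : IsDuality A A' coev ev) [IsIso (μ F A A')]
    (f : A ⟶ A) :
    catTrace (F.obj A')
        (ε F ≫ F.map coev ≫ inv (μ F A A'))
        (μ F A' A ≫ F.map ev ≫ inv (ε F))
        (F.map f)
      = ε F ≫ F.map (catTrace A' coev ev f) ≫ inv (ε F) := by
  have h1 : inv (μ F A A') ≫ (F.map f ▷ F.obj A') = F.map (f ▷ A') ≫ inv (μ F A A') := by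
    rw [IsIso.eq_comp_inv, Category.assoc, IsIso.inv_comp_eq]
    simpa using (μ_natural_left F f A').symm
  have h2 : inv (μ F A A') ≫ (β_ (F.obj A) (F.obj A')).hom ≫ μ F A' A
      = F.map (β_ A A').hom := by
    rw [IsIso.inv_comp_eq]
    exact (Functor.LaxBraided.braided A A').symm
  simp only [catTrace, Category.assoc]
  slice_lhs 3 4 => rw [h1]
  slice_lhs 4 6 => rw [h2]
  simp only [F.map_comp, Category.assoc]
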